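/- Let (T, B, τ) be a TIM decomposition of width φ of a temporal graph 𝒢, and root T at an arbitrary node (so that the children of a node s are its tree-neighbours other than the node on the undirected path from s to the root). For each node s, let B²(s) = {(v, τ(s)) : v ∈ B(s)} ∪ {(v, τ(s_c)) : s_c a child of s and v ∈ B(s_c)}. Then |B²(s)| ≤ 3φ² for every node s of T; that is, the 2-step TIM decomposition has width at most 3φ². -/

import Mathlib

variable {V : Type} [Fintype V] [DecidableEq V]

/-- The snapshot of a temporal graph `(G, lam)` at time `t`: the static graph on `V`
whose edges are the edges of `G` active at time `t`. -/
def snapshot (G : SimpleGraph V) (lam : Sym2 V → Finset ℕ) (t : ℕ) : SimpleGraph V where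
  Adj u v := G.Adj u v ∧ t ∈ lam s(u, v)
  symm := by
    constructor
    rintro u v ⟨h1, h2⟩
    exact ⟨h1.symm, by rwa [Sym2.eq_swap]⟩
  loopless := by
    constructor
    intro v h
    exact G.irrefl h.1

/-- The undirected graph underlying the (uniquely determined) arc structure of a
candidate TIM decomposition: nodes `i` and `j` are adjacent iff their bags intersect
and their times are consecutive. -/
def timTree {ι : Type} (B : ι → Finset V) (τ : ι → ℕ) : SimpleGraph ι where
  Adj i j := (B i ∩ B j).Nonempty ∧ (τ j = τ i + 1 ∨ τ i = τ j + 1)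
  symm := by
    constructor
    rintro i j ⟨h1, h2⟩
    exact ⟨by rwa [Finset.inter_comm], h2.symm⟩
  loopless := by
    constructor
    rintro i ⟨-, h⟩
    rcases h with h | h <;> omega

/-- `(i, j)` is an arc of the TIM decomposition: the bags intersect and
`τ j = τ i + 1`. -/
def timArc {ι : Type} (B : ι → Finset V) (τ : ι → ℕ) (i j : ι) : Prop :=
  (B i ∩ B j).Nonempty ∧ τ j = τ i + 1

/-- `(ι, B, τ)` is a TIM decomposition of the temporal graph `(G, lam)` with lifetime `Λ`:
every time label lies in `{1, …, Λ}`; every vertex lies in exactly one bag with each time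
label; every time-edge is contained in a bag with the corresponding time label; and the
graph on the nodes whose (undirected) edges correspond to the arcs
`{(i, j) : B i ∩ B j ≠ ∅ ∧ τ j = τ i + 1}` is a tree. -/
def IsTIMDecomp (G : SimpleGraph V) (lam : Sym2 V → Finset ℕ) (Λ : ℕ)
    {ι : Type} (B : ι → Finset V) (τ : ι → ℕ) : Prop :=
  (∀ i, τ i ∈ Finset.Icc 1 Λ) ∧
  (∀ v : V, ∀ t ∈ Finset.Icc 1 Λ, ∃! i, τ i = t ∧ v ∈ B i) ∧
  (∀ e ∈ G.edgeSet, ∀ t ∈ lam e, ∃ i, τ i = t ∧ ∀ v ∈ e, v ∈ B i) ∧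
  (timTree B τ).IsTree

/-- With the decomposition tree rooted at `r`, node `c` is a child of node `s`:
they are tree-neighbours and `c` is further from the root than `s`. -/
def IsChild {ι : Type} (B : ι → Finset V) (τ : ι → ℕ) (r s c : ι) : Prop :=
  (timTree B τ).Adj s c ∧ (timTree B τ).dist c r = (timTree B τ).dist s r + 1

/-- The bag `B²(s)` of the 2-step TIM decomposition (with the tree rooted at `r`):
all pairs `(v, τ s)` with `v ∈ B s`, together with all pairs `(v, τ c)` with `c` a child
of `s` and `v ∈ B c`. -/
def twoStepBag {ι : Type} (B : ι → Finset V) (τ : ι → ℕ) (r s : ι) : Set (V × ℕ) :=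
  {p | p.1 ∈ B s ∧ p.2 = τ s} ∪ {p | ∃ c, IsChild B τ r s c ∧ p.1 ∈ B c ∧ p.2 = τ c}

/-- If `(T, B, τ)` is a TIM decomposition of width `φ`, rooted at an
arbitrary node `r`, then every bag of the associated 2-step TIM decomposition has
cardinality at most `3φ²`. -/
theorem stmt_14 (G : SimpleGraph V) (lam : Sym2 V → Finset ℕ) (Λ : ℕ)
    {ι : Type} [Fintype ι] (B : ι → Finset V) (τ : ι → ℕ) (φ : ℕ)
    (hne : ∀ e ∈ G.edgeSet, (lam e).Nonempty)
    (hempty : ∀ e, e ∉ G.edgeSet → lam e = ∅)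
    (hbdd : ∀ e, ∀ t ∈ lam e, 1 ≤ t ∧ t ≤ Λ)
    (hlife : ∃ e ∈ G.edgeSet, Λ ∈ lam e)
    (hdec : IsTIMDecomp G lam Λ B τ)
    (hwidth : ∀ i, (B i).card ≤ φ)
    (r : ι) :
    ∀ s : ι, (twoStepBag B τ r s).ncard ≤ 3 * φ ^ 2 := by
  intro s
  classical
  obtain ⟨htime, huniq, -, -⟩ := hdec
  -- disjointness of bags at equal times
  have hdisj : ∀ i j : ι, τ i = τ j → ∀ v, v ∈ B i → v ∈ B j → i = j := by
    intro i j hτ v hvi hvj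
    obtain ⟨k, -, hk⟩ := huniq v (τ i) (htime i)
    exact (hk i ⟨rfl, hvi⟩).trans (hk j ⟨hτ.symm, hvj⟩).symm
  set C : Finset ι := Finset.univ.filter (fun c => IsChild B τ r s c) with hC
  have hchild : ∀ c ∈ C, (B c ∩ B s).Nonempty ∧ (τ c = τ s + 1 ∨ τ s = τ c + 1) := by
    intro c hc
    rw [hC, Finset.mem_filter] at hc
    obtain ⟨hne', hor⟩ := hc.2.1
    refine ⟨by rwa [Finset.inter_comm] at hne', ?_⟩
    tauto
  set C1 : Finset ι := C.filter (fun c => τ c = τ s + 1) with hC1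
  set C2 : Finset ι := C.filter (fun c => τ s = τ c + 1) with hC2
  have hCsub : C ⊆ C1 ∪ C2 := by
    intro c hc
    rcases (hchild c hc).2 with h | h
    · exact Finset.mem_union_left _ (Finset.mem_filter.mpr ⟨hc, h⟩)
    · exact Finset.mem_union_right _ (Finset.mem_filter.mpr ⟨hc, h⟩)
  -- bound on the number of children at a fixed time
  have hcount : ∀ (D : Finset ι) (t : ℕ), (∀ c ∈ D, τ c = t) → D ⊆ C → D.card ≤ φ := by
    intro D t ht hD
    rcases D.eq_empty_or_nonempty with rfl | ⟨c₀, hc₀⟩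
    · simp
    obtain ⟨v₀, -⟩ := (hchild c₀ (hD hc₀)).1
    have key : D.card ≤ (B s).card := by
      apply Finset.card_le_card_of_injOn
        (fun c => if h : (B c ∩ B s).Nonempty then h.choose else v₀)
      · intro c hc
        have h := (hchild c (hD hc)).1
        simp only [dif_pos h]
        exact (Finset.mem_inter.mp h.choose_spec).2
      · intro a ha b hb hab
        have hA := (hchild a (hD ha)).1
        have hB := (hchild b (hD hb)).1
        simp only [dif_pos hA, dif_pos hB] at hab
        have h1 := Finset.mem_inter.mp hA.choose_spec
        have h2 := Finset.mem_inter.mp hB.choose_spec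
        exact hdisj a b ((ht a ha).trans (ht b hb).symm) _ h1.1 (hab ▸ h2.1)
    exact key.trans (hwidth s)
  have hC1card : C1.card ≤ φ := hcount C1 (τ s + 1)
    (fun c hc => (Finset.mem_filter.mp hc).2) (Finset.filter_subset _ _)
  have hC2card : C2.card ≤ φ := by
    refine hcount C2 (τ s - 1) (fun c hc => ?_) (Finset.filter_subset _ _)
    have := (Finset.mem_filter.mp hc).2
    omega
  have hCcard : C.card ≤ 2 * φ := by
    calc C.card ≤ (C1 ∪ C2).card := Finset.card_le_card hCsub
    _ ≤ C1.card + C2.card := Finset.card_union_le _ _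
    _ ≤ 2 * φ := by omega
  -- the big finset covering the two-step bag
  set F : Finset (V × ℕ) := (B s ×ˢ {τ s}) ∪ C.biUnion (fun c => B c ×ˢ {τ c}) with hF
  have hsub : twoStepBag B τ r s ⊆ ↑F := by
    rintro ⟨v, t⟩ hp
    rcases hp with ⟨hv, ht⟩ | ⟨c, hchd, hv, ht⟩
    · exact Finset.mem_union_left _ (Finset.mem_product.mpr ⟨hv, Finset.mem_singleton.mpr ht⟩)
    · refine Finset.mem_union_right _ (Finset.mem_biUnion.mpr ⟨c, ?_, ?_⟩)
      · rw [hC, Finset.mem_filter]; exact ⟨Finset.mem_univ _, hchd⟩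
      · exact Finset.mem_product.mpr ⟨hv, Finset.mem_singleton.mpr ht⟩
  have hFcard : F.card ≤ 3 * φ ^ 2 := by
    have h1 : (B s ×ˢ ({τ s} : Finset ℕ)).card ≤ φ := by
      rw [Finset.card_product, Finset.card_singleton, mul_one]; exact hwidth s
    have h2 : (C.biUnion (fun c => B c ×ˢ {τ c})).card ≤ 2 * φ * φ := by
      calc (C.biUnion (fun c => B c ×ˢ {τ c})).card
          ≤ ∑ c ∈ C, (B c ×ˢ ({τ c} : Finset ℕ)).card := Finset.card_biUnion_le
        _ ≤ ∑ _c ∈ C, φ := Finset.sum_le_sum (fun c _ => by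
            rw [Finset.card_product, Finset.card_singleton, mul_one]; exact hwidth c)
        _ = C.card * φ := by rw [Finset.sum_const, smul_eq_mul]
        _ ≤ 2 * φ * φ := Nat.mul_le_mul_right φ hCcard
    have hφ : φ ≤ φ ^ 2 := by nlinarith
    calc F.card ≤ (B s ×ˢ ({τ s} : Finset ℕ)).card
        + (C.biUnion (fun c => B c ×ˢ {τ c})).card := Finset.card_union_le _ _
      _ ≤ φ + 2 * φ * φ := by omega
      _ ≤ 3 * φ ^ 2 := by nlinarith
  calc (twoStepBag B τ r s).ncard ≤ (↑F : Set (V × ℕ)).ncard :=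
        Set.ncard_le_ncard hsub F.finite_toSet
    _ = F.card := by rw [Set.ncard_coe_finset]
    _ ≤ 3 * φ ^ 2 := hFcard
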